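/- Let A, B : ℝ^{2d} → ℝ^{2d} be smooth DFT vectors and define their lifts 𝔸 = (𝔸^I, Ã_I) := (A^I, η_{IJ}A^J) and 𝔹 = (𝔹^I, B̃_I) := (B^I, η_{IJ}B^J). Let the untwisted Courant bracket of the large Courant algebroid over ℝ^{2d} have components: vector part [𝔸,𝔹]^J = 𝔸^I ∂_I 𝔹^J − 𝔹^I ∂_I 𝔸^J, and form part [𝔸,𝔹]_J = 𝔸^I ∂_I B̃_J − 𝔹^I ∂_I Ã_J − ½(𝔸^I ∂_J B̃_I − B̃_I ∂_J 𝔸^I − 𝔹^I ∂_J Ã_I + Ã_I ∂_J 𝔹^I). Then for every index J one has ½([𝔸,𝔹]^J + η^{JK}[𝔸,𝔹]_K) = A^K ∂_K B^J − B^K ∂_K A^J − ½ A^K ∂^J B_K + ½ B^K ∂^J A_K; that is, the projection p_+ of the Courant bracket of lifted sections equals the C-bracket of DFT. -/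
import Mathlib


open scoped BigOperators

noncomputable section

/-- Doubled index set: `I = 1,…,2d`, realized as `Fin d ⊕ Fin d`. -/
abbrev DIdx (d : ℕ) := Fin d ⊕ Fin d

/-- The doubled space `ℝ^{2d}`. -/
abbrev DSpace (d : ℕ) := DIdx d → ℝ

/-- The constant O(d,d)-invariant metric `η = ((0,1_d),(1_d,0))`; numerically `η⁻¹ = η`. -/
def eta {d : ℕ} : DIdx d → DIdx d → ℝ
  | Sum.inl i, Sum.inr j => if i = j then 1 else 0
  | Sum.inr i, Sum.inl j => if i = j then 1 else 0
  | _, _ => 0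

/-- Partial derivative `∂_I f (x)`. -/
def pd {d : ℕ} (f : DSpace d → ℝ) (I : DIdx d) (x : DSpace d) : ℝ :=
  fderiv ℝ f x (Pi.single I 1)

/-- Lowered components `A_I := η_{IJ} A^J`. -/
def low {d : ℕ} (A : DSpace d → DSpace d) (I : DIdx d) : DSpace d → ℝ :=
  fun x => ∑ J, eta I J * A x J

/-- Raised derivative `∂^I f := η^{IJ} ∂_J f`. -/
def pdU {d : ℕ} (f : DSpace d → ℝ) (I : DIdx d) (x : DSpace d) : ℝ :=
  ∑ J, eta I J * pd f J x

def sg {d : ℕ} : DIdx d → DIdx d := Sum.swap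

lemma sum_eta {d : ℕ} (K : DIdx d) (f : DIdx d → ℝ) :
    ∑ L, eta K L * f L = f (sg K) := by
  cases K with
  | inl i => simp [eta, sg, Fintype.sum_sum_type, ite_mul]
  | inr i => simp [eta, sg, Fintype.sum_sum_type, ite_mul]

lemma sg_sg {d : ℕ} (K : DIdx d) : sg (sg K) = K := Sum.swap_swap K

lemma low_eq {d : ℕ} (A : DSpace d → DSpace d) (K : DIdx d) :
    low A K = fun y => A y (sg K) := by
  funext y; exact sum_eta K (A y)

lemma pdU_eq {d : ℕ} (f : DSpace d → ℝ) (I : DIdx d) (x : DSpace d) :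
    pdU f I x = pd f (sg I) x := sum_eta I (fun L => pd f L x)

lemma sum_sg {d : ℕ} (g : DIdx d → ℝ) : ∑ I, g (sg I) = ∑ I, g I :=
  Fintype.sum_equiv (Equiv.sumComm (Fin d) (Fin d)) _ _ (fun _ => rfl)

/-- The projection `p₊` of the (untwisted) Courant bracket of the lifted
sections `𝔸 = (A^I, η_{IJ}A^J)`, `𝔹 = (B^I, η_{IJ}B^J)` of the large Courant algebroid over
`ℝ^{2d}` equals the C-bracket of DFT. -/
theorem statement0 {d : ℕ} (A B : DSpace d → DSpace d)
    (hA : ContDiff ℝ (⊤ : ℕ∞) A) (hB : ContDiff ℝ (⊤ : ℕ∞) B) (J : DIdx d) (x : DSpace d) :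
    (1/2) * ((∑ I, (A x I * pd (fun y => B y J) I x - B x I * pd (fun y => A y J) I x))
      + ∑ K, eta J K *
        ((∑ I, (A x I * pd (low B K) I x - B x I * pd (low A K) I x))
          - (1/2) * ∑ I, (A x I * pd (low B I) K x - low B I x * pd (fun y => A y I) K x
              - B x I * pd (low A I) K x + low A I x * pd (fun y => B y I) K x)))
    = (∑ K, (A x K * pd (fun y => B y J) K x - B x K * pd (fun y => A y J) K x))
      - (1/2) * (∑ K, A x K * pdU (low B K) J x)
      + (1/2) * (∑ K, B x K * pdU (low A K) J x) := by
  simp only [low_eq, pdU_eq, sg_sg]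
  rw [sum_eta J]
  simp only [sg_sg]
  set S : ℝ := ∑ I, (A x I * pd (fun y => B y J) I x - B x I * pd (fun y => A y J) I x) with hS
  have h1 : ∑ I, (A x I * pd (fun y => B y (sg I)) (sg J) x
        - B x (sg I) * pd (fun y => A y I) (sg J) x
        - B x I * pd (fun y => A y (sg I)) (sg J) x
        + A x (sg I) * pd (fun y => B y I) (sg J) x)
      = 2 * ∑ I, (A x (sg I) * pd (fun y => B y I) (sg J) x
        - B x (sg I) * pd (fun y => A y I) (sg J) x) := by
    have h2 : ∑ I, A x I * pd (fun y => B y (sg I)) (sg J) x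
        = ∑ I, A x (sg I) * pd (fun y => B y I) (sg J) x := by
      rw [← sum_sg (fun I => A x I * pd (fun y => B y (sg I)) (sg J) x)]
      simp only [sg_sg]
    have h3 : ∑ I, B x I * pd (fun y => A y (sg I)) (sg J) x
        = ∑ I, B x (sg I) * pd (fun y => A y I) (sg J) x := by
      rw [← sum_sg (fun I => B x I * pd (fun y => A y (sg I)) (sg J) x)]
      simp only [sg_sg]
    rw [show (fun I => A x I * pd (fun y => B y (sg I)) (sg J) x
        - B x (sg I) * pd (fun y => A y I) (sg J) x
        - B x I * pd (fun y => A y (sg I)) (sg J) x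
        + A x (sg I) * pd (fun y => B y I) (sg J) x)
      = (fun I => (A x I * pd (fun y => B y (sg I)) (sg J) x
        - B x (sg I) * pd (fun y => A y I) (sg J) x)
        + (A x (sg I) * pd (fun y => B y I) (sg J) x
        - B x I * pd (fun y => A y (sg I)) (sg J) x)) from funext fun I => by ring,
      Finset.sum_add_distrib, Finset.sum_sub_distrib, Finset.sum_sub_distrib,
      Finset.sum_sub_distrib, h2, h3]
    ring
  rw [h1]
  have h4 : ∑ K, A x K * pd (fun y => B y (sg K)) (sg J) x
      = ∑ K, A x (sg K) * pd (fun y => B y K) (sg J) x := by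
    rw [← sum_sg (fun K => A x K * pd (fun y => B y (sg K)) (sg J) x)]
    simp only [sg_sg]
  have h5 : ∑ K, B x K * pd (fun y => A y (sg K)) (sg J) x
      = ∑ K, B x (sg K) * pd (fun y => A y K) (sg J) x := by
    rw [← sum_sg (fun K => B x K * pd (fun y => A y (sg K)) (sg J) x)]
    simp only [sg_sg]
  rw [h4, h5, Finset.sum_sub_distrib]
  ring
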